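/- Let G be an ADMG and let X, Y, Z, R be pairwise disjoint subsets of its vertices. Suppose G contains a structure of interest σ (as a subgraph) such that: σ contains a vertex of X and a vertex of Y; Root(σ) ⊆ Z ∪ X ∪ Y ∪ R; and no non-root vertex of σ lies in Z. If every vertex of R is an ancestor of Z in G, then G contains a structure of interest that connects X and Y under Z. -/

import Mathlib

/-!  Mixed graphs, ADMGs, d-separation, structures of interest, and cluster DAGs
(following Anand et al. and the cyclic C-DAG extension). -/

/-- The way an edge is traversed along a path: `fwd` = directed edge pointing
towards the right endpoint, `bwd` = directed edge pointing towards the left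
endpoint, `both` = bidirected edge (arrowheads at both endpoints). -/
inductive Link : Type
  | fwd
  | bwd
  | both
  deriving DecidableEq

/-- Is there an arrowhead at the right endpoint of the link? -/
def Link.headRight : Link → Bool
  | .fwd => true
  | .bwd => false
  | .both => true

/-- Is there an arrowhead at the left endpoint of the link? -/
def Link.headLeft : Link → Bool
  | .fwd => false
  | .bwd => true
  | .both => true

/-- A mixed graph on a vertex set `verts`: a set of directed edges and a
(symmetric) set of bidirected edges, all between vertices of `verts`. -/
structure MixedGraph (V : Type*) where
  verts : Set V
  dir : V → V → Prop
  bi : V → V → Prop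
  dir_mem : ∀ ⦃a b : V⦄, dir a b → a ∈ verts ∧ b ∈ verts
  bi_mem : ∀ ⦃a b : V⦄, bi a b → a ∈ verts ∧ b ∈ verts
  bi_symm : ∀ ⦃a b : V⦄, bi a b → bi b a

namespace MixedGraph

variable {V C : Type*}

/-- `G.Anc v w` : there is a directed path from `v` to `w`
(`v` is an ancestor of `w`, `w` a descendant of `v`). -/
def Anc (G : MixedGraph V) : V → V → Prop := Relation.ReflTransGen G.dir

/-- The set of ancestors of the set `Z` in `G`. -/
def AncSet (G : MixedGraph V) (Z : Set V) : Set V := {v | ∃ z ∈ Z, G.Anc v z}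

/-- The directed part of `G` has no directed cycle. -/
def Acyclic (G : MixedGraph V) : Prop := ∀ ⦃a b : V⦄, G.dir a b → ¬ G.Anc b a

/-- An acyclic directed mixed graph: no directed cycle, and all edges join
distinct vertices. -/
def IsADMG (G : MixedGraph V) : Prop :=
  G.Acyclic ∧ (∀ v, ¬ G.dir v v) ∧ (∀ v, ¬ G.bi v v)

/-- `H` is a subgraph of `G`. -/
def IsSubgraph (H G : MixedGraph V) : Prop :=
  H.verts ⊆ G.verts ∧ (∀ ⦃a b : V⦄, H.dir a b → G.dir a b) ∧
    (∀ ⦃a b : V⦄, H.bi a b → G.bi a b)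

/-- Adjacency, viewing all edges as undirected. -/
def Adj (G : MixedGraph V) (a b : V) : Prop := G.dir a b ∨ G.dir b a ∨ G.bi a b

/-- `G` has a single connected component (viewing all edges as undirected). -/
def Connected (G : MixedGraph V) : Prop :=
  G.verts.Nonempty ∧ ∀ a ∈ G.verts, ∀ b ∈ G.verts, Relation.ReflTransGen G.Adj a b

/-- A root: a vertex with no outgoing directed edge. -/
def IsRoot (G : MixedGraph V) (v : V) : Prop := v ∈ G.verts ∧ ∀ w, ¬ G.dir v w

/-- The set of roots of `G`. -/
def roots (G : MixedGraph V) : Set V := {v | G.IsRoot v}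

/-- A structure of interest: an ADMG with a single connected component in which
every vertex has at most one outgoing directed edge, or exactly two outgoing
directed edges and no edge with an arrowhead at it. -/
def IsSOI (σ : MixedGraph V) : Prop :=
  σ.IsADMG ∧ σ.Connected ∧
    ∀ v ∈ σ.verts,
      (∀ ⦃w₁ w₂ : V⦄, σ.dir v w₁ → σ.dir v w₂ → w₁ = w₂) ∨
      ((∃ w₁ w₂, w₁ ≠ w₂ ∧ σ.dir v w₁ ∧ σ.dir v w₂ ∧
          ∀ w, σ.dir v w → w = w₁ ∨ w = w₂) ∧
        (∀ w, ¬ σ.dir w v) ∧ (∀ w, ¬ σ.bi v w))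

/-- A structure of interest `σ` (as a subgraph of the ambient graph) connects
`X` and `Y` under `Z`: it contains a vertex of `X` and a vertex of `Y`, its
roots lie in `X ∪ Y ∪ Z`, and no non-root vertex of `σ` lies in `Z`. -/
def Connects (σ : MixedGraph V) (X Y Z : Set V) : Prop :=
  (σ.verts ∩ X).Nonempty ∧ (σ.verts ∩ Y).Nonempty ∧
    σ.roots ⊆ X ∪ Y ∪ Z ∧ ∀ v ∈ σ.verts, ¬ σ.IsRoot v → v ∉ Z

/-- The link `l` joins `a` (left) to `b` (right) in `G`. -/
def LinkOk (G : MixedGraph V) (a : V) (l : Link) (b : V) : Prop :=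
  match l with
  | .fwd => G.dir a b
  | .bwd => G.dir b a
  | .both => G.bi a b

/-- A walk from `a`, given as the list of successive (link, next vertex) steps. -/
inductive IsWalk (G : MixedGraph V) : V → List (Link × V) → Prop
  | nil (v : V) : IsWalk G v []
  | cons {a b : V} {l : Link} {rest : List (Link × V)} :
      G.LinkOk a l b → IsWalk G b rest → IsWalk G a ((l, b) :: rest)

/-- The vertices visited by a walk. -/
def pathVerts (a : V) (steps : List (Link × V)) : List V := a :: steps.map Prod.snd

/-- The last vertex of a walk. -/
def lastVert (a : V) (steps : List (Link × V)) : V := (steps.map Prod.snd).getLastD a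

/-- A path: a walk visiting pairwise distinct vertices. -/
def IsPath (G : MixedGraph V) (a : V) (steps : List (Link × V)) : Prop :=
  G.IsWalk a steps ∧ (pathVerts a steps).Nodup

/-- Activity of the interior vertex `v`, flanked by links `l₁` and `l₂`,
relative to `Z` : if `v` is a collider it must be an ancestor of `Z`
(in particular possibly in `Z`), otherwise it must avoid `Z`. -/
def ActiveTriple (G : MixedGraph V) (Z : Set V) (l₁ : Link) (v : V) (l₂ : Link) : Prop :=
  if l₁.headRight && l₂.headLeft then v ∈ G.AncSet Z else v ∉ Z

/-- `X` and `Y` are d-connected given `Z` in `G`: some path from a vertex of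
`X` to a vertex of `Y` is active given `Z`. -/
def DConnected (G : MixedGraph V) (X Y Z : Set V) : Prop :=
  ∃ (a : V) (steps : List (Link × V)),
    G.IsPath a steps ∧ a ∈ X ∧ lastVert a steps ∈ Y ∧
    a ∉ Z ∧ lastVert a steps ∉ Z ∧
    List.Chain' (fun s t => G.ActiveTriple Z s.1 s.2 t.1) steps

/-- The mutilated graph `G_{Ā,B̲}` : every edge with an arrowhead at a vertex
of `A` and every directed edge out of a vertex of `B` is deleted. -/
def mutilate (G : MixedGraph V) (A B : Set V) : MixedGraph V where
  verts := G.verts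
  dir a b := G.dir a b ∧ b ∉ A ∧ a ∉ B
  bi a b := G.bi a b ∧ a ∉ A ∧ b ∉ A
  dir_mem := fun _ _ h => G.dir_mem h.1
  bi_mem := fun _ _ h => G.bi_mem h.1
  bi_symm := fun _ _ h => ⟨G.bi_symm h.1, h.2.2, h.2.1⟩

/-- Union of two mixed graphs. -/
def union (G H : MixedGraph V) : MixedGraph V where
  verts := G.verts ∪ H.verts
  dir a b := G.dir a b ∨ H.dir a b
  bi a b := G.bi a b ∨ H.bi a b
  dir_mem := by
    rintro a b (h | h)
    · exact ⟨Or.inl (G.dir_mem h).1, Or.inl (G.dir_mem h).2⟩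
    · exact ⟨Or.inr (H.dir_mem h).1, Or.inr (H.dir_mem h).2⟩
  bi_mem := by
    rintro a b (h | h)
    · exact ⟨Or.inl (G.bi_mem h).1, Or.inl (G.bi_mem h).2⟩
    · exact ⟨Or.inr (H.bi_mem h).1, Or.inr (H.bi_mem h).2⟩
  bi_symm := by
    rintro a b (h | h)
    · exact Or.inl (G.bi_symm h)
    · exact Or.inr (H.bi_symm h)

/-- Add the directed edge `x → y`. -/
def addDir (G : MixedGraph V) (x y : V) : MixedGraph V where
  verts := G.verts ∪ {x, y}
  dir a b := G.dir a b ∨ (a = x ∧ b = y)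
  bi := G.bi
  dir_mem := by
    rintro a b (h | ⟨rfl, rfl⟩)
    · exact ⟨Or.inl (G.dir_mem h).1, Or.inl (G.dir_mem h).2⟩
    · exact ⟨Or.inr (by simp), Or.inr (by simp)⟩
  bi_mem := fun _ _ h => ⟨Or.inl (G.bi_mem h).1, Or.inl (G.bi_mem h).2⟩
  bi_symm := fun _ _ h => G.bi_symm h

/-- Add the bidirected edge `x ↔ y`. -/
def addBi (G : MixedGraph V) (x y : V) : MixedGraph V where
  verts := G.verts ∪ {x, y}
  dir := G.dir
  bi a b := G.bi a b ∨ (a = x ∧ b = y) ∨ (a = y ∧ b = x)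
  dir_mem := fun _ _ h => ⟨Or.inl (G.dir_mem h).1, Or.inl (G.dir_mem h).2⟩
  bi_mem := by
    rintro a b (h | ⟨rfl, rfl⟩ | ⟨rfl, rfl⟩)
    · exact ⟨Or.inl (G.bi_mem h).1, Or.inl (G.bi_mem h).2⟩
    · exact ⟨Or.inr (by simp), Or.inr (by simp)⟩
    · exact ⟨Or.inr (by simp), Or.inr (by simp)⟩
  bi_symm := by
    rintro a b (h | ⟨rfl, rfl⟩ | ⟨rfl, rfl⟩)
    · exact Or.inl (G.bi_symm h)
    · exact Or.inr (Or.inr ⟨rfl, rfl⟩)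
    · exact Or.inr (Or.inl ⟨rfl, rfl⟩)

/-- Delete the directed edge `x → y`. -/
def deleteDir (G : MixedGraph V) (x y : V) : MixedGraph V where
  verts := G.verts
  dir a b := G.dir a b ∧ ¬(a = x ∧ b = y)
  bi := G.bi
  dir_mem := fun _ _ h => G.dir_mem h.1
  bi_mem := fun _ _ h => G.bi_mem h
  bi_symm := fun _ _ h => G.bi_symm h

/-- Delete the bidirected edge `x ↔ y`. -/
def deleteBi (G : MixedGraph V) (x y : V) : MixedGraph V where
  verts := G.verts
  dir := G.dir
  bi a b := G.bi a b ∧ ¬((a = x ∧ b = y) ∨ (a = y ∧ b = x))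
  dir_mem := fun _ _ h => G.dir_mem h
  bi_mem := fun _ _ h => G.bi_mem h.1
  bi_symm := fun _ _ h => ⟨G.bi_symm h.1, fun hc => h.2 (by tauto)⟩

/-- The cluster of micro-variables assigned to the cluster label `c`. -/
def clusterOf (π : V → C) (c : C) : Set V := {v | π v = c}

/-- `G` (an ADMG on all of `V`) is compatible with the cluster-level mixed
graph `GC` : `GC` is exactly the cluster graph induced by `G` via the
partition `π`. -/
def Compatible (π : V → C) (GC : MixedGraph C) (G : MixedGraph V) : Prop :=
  G.IsADMG ∧ G.verts = Set.univ ∧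
    (∀ c d, GC.dir c d ↔ ∃ a b, π a = c ∧ π b = d ∧ G.dir a b) ∧
    (∀ c d, GC.bi c d ↔ ∃ a b, π a = c ∧ π b = d ∧ G.bi a b)

/-- Within each cluster, the indices of the vertices (given by the ambient
linear order on `V`) follow a topological order of `G`. -/
def FollowsTopo [LinearOrder V] (π : V → C) (G : MixedGraph V) : Prop :=
  ∃ t : V → ℕ, Function.Injective t ∧ (∀ ⦃a b : V⦄, G.dir a b → t a < t b) ∧
    ∀ ⦃a b : V⦄, π a = π b → a < b → t a < t b

/-- The cluster `c` has cardinality at most one. -/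
def SingletonCluster (π : V → C) (c : C) : Prop :=
  ∀ ⦃a b : V⦄, π a = c → π b = c → a = b

/-- `GC` contains a directed cycle all of whose clusters have cardinality 1. -/
def HasSingletonCycle (π : V → C) (GC : MixedGraph C) : Prop :=
  ∃ c, Relation.TransGen
    (fun c₁ c₂ => GC.dir c₁ c₂ ∧ SingletonCluster π c₁ ∧ SingletonCluster π c₂) c c

/-- The canonical compatible graph of `GC` : all bidirected edges between the
relevant clusters; for self-loops all within-cluster edges following the index
order; for each directed edge between distinct clusters the edge from the
first vertex of the source to the last vertex of the target. -/
def canonicalGraph [LinearOrder V] (π : V → C) (GC : MixedGraph C) : MixedGraph V where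
  verts := Set.univ
  dir a b :=
    (π a = π b ∧ GC.dir (π a) (π b) ∧ a < b) ∨
    (π a ≠ π b ∧ GC.dir (π a) (π b) ∧
      IsLeast (clusterOf π (π a)) a ∧ IsGreatest (clusterOf π (π b)) b)
  bi a b := a ≠ b ∧ GC.bi (π a) (π b)
  dir_mem := fun _ _ _ => ⟨trivial, trivial⟩
  bi_mem := fun _ _ _ => ⟨trivial, trivial⟩
  bi_symm := fun _ _ h => ⟨h.1.symm, GC.bi_symm h.2⟩

/-- The unfolded graph of `GC` : the canonical compatible graph together with
all eligible directed edges, i.e. those corresponding to a cluster-level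
directed edge whose addition to the canonical graph creates no directed
cycle. -/
def unfoldedGraph [LinearOrder V] (π : V → C) (GC : MixedGraph C) : MixedGraph V where
  verts := Set.univ
  dir a b := (canonicalGraph π GC).dir a b ∨
    (GC.dir (π a) (π b) ∧ ((canonicalGraph π GC).addDir a b).Acyclic)
  bi a b := (canonicalGraph π GC).bi a b
  dir_mem := fun _ _ _ => ⟨trivial, trivial⟩
  bi_mem := fun _ _ _ => ⟨trivial, trivial⟩
  bi_symm := fun _ _ h => (canonicalGraph π GC).bi_symm h

/-- Failure of rule `i` of Pearl's calculus (atomically) in `G` :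
`0` ↦ rule 1, `1` ↦ rule 2, `2` ↦ rule 3. -/
def RuleFails (G : MixedGraph V) (W X Y Z : Set V) (i : Fin 3) : Prop :=
  if i = 0 then (G.mutilate W ∅).DConnected X Y (W ∪ Z)
  else if i = 1 then (G.mutilate W X).DConnected X Y (W ∪ Z)
  else (G.mutilate (W ∪ (X \ (G.mutilate W ∅).AncSet Z)) ∅).DConnected X Y (W ∪ Z)

end MixedGraph

open MixedGraph

/-! A root `r` of `σ` outside `X ∪ Y ∪ Z` lies in `R`, hence is an ancestor of `Z` and has an
edge `r → w` of `G` with `w` still an ancestor of `Z`. Adding `r → w` to `σ`, after dropping one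
of the two outgoing edges of `w` when `w` is a fork (the one whose removal leaves `r` on the side
of its head, so that `r → w` reconnects), gives again a structure of interest in `G`. This turns
`r` into a non-root and creates at most the new root `w`, which has strictly fewer descendants
than `r` because `G` is acyclic. So the total number of descendants of roots outside
`X ∪ Y ∪ Z` decreases, and when no such root is left the structure connects `X` and `Y`
under `Z`. -/

namespace MixedGraph

open Relation

variable {V : Type*}

section Adjacency

theorem adj_symm (G : MixedGraph V) {a b : V} (h : G.Adj a b) : G.Adj b a := by
  rcases h with h | h | h
  · exact Or.inr (Or.inl h)
  · exact Or.inl h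
  · exact Or.inr (Or.inr (G.bi_symm h))

theorem reflTransGen_adj_mono {G H : MixedGraph V} (hdir : ∀ ⦃a b⦄, G.dir a b → H.dir a b)
    (hbi : ∀ ⦃a b⦄, G.bi a b → H.bi a b) {a b : V} (h : ReflTransGen G.Adj a b) :
    ReflTransGen H.Adj a b :=
  ReflTransGen.mono (fun _ _ => Or.imp (@hdir _ _) (Or.imp (@hdir _ _) (@hbi _ _))) _ _ h

theorem reflTransGen_adj_symm (G : MixedGraph V) {a b : V} (h : ReflTransGen G.Adj a b) :
    ReflTransGen G.Adj b a := by
  induction h with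
  | refl => exact .refl
  | tail _ hbc ih => exact .head (G.adj_symm hbc) ih

theorem connected_of_forall_reflTransGen {G : MixedGraph V} {h : V} (hh : h ∈ G.verts)
    (hreach : ∀ a ∈ G.verts, ReflTransGen G.Adj a h) : G.Connected :=
  ⟨⟨h, hh⟩, fun a ha b hb =>
    (hreach a ha).trans (G.reflTransGen_adj_symm (hreach b hb))⟩

theorem eq_of_reflTransGen_adj_of_isolated {G : MixedGraph V} {v f : V}
    (hiso : ∀ u, ¬ G.Adj u f) (h : ReflTransGen G.Adj v f) : v = f := by
  rcases h.cases_tail with rfl | ⟨u, -, hu⟩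
  · rfl
  · exact absurd hu (hiso u)

theorem reflTransGen_adj_deleteDir_or {G : MixedGraph V} {v f c : V}
    (h : ReflTransGen G.Adj v f) :
    ReflTransGen (G.deleteDir f c).Adj v f ∨ ReflTransGen (G.deleteDir f c).Adj v c := by
  induction h using ReflTransGen.head_induction_on with
  | refl => exact Or.inl .refl
  | @head a b hab _ ih =>
    by_cases hkept : (G.deleteDir f c).Adj a b
    · exact ih.imp (.head hkept) (.head hkept)
    · rcases hab with h | h | h
      · have hac : a = f ∧ b = c := by
          by_contra hne
          exact hkept (Or.inl ⟨h, hne⟩)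
        exact Or.inl (hac.1 ▸ .refl)
      · have hbc : b = f ∧ a = c := by
          by_contra hne
          exact hkept (Or.inr (Or.inl ⟨h, hne⟩))
        exact Or.inr (hbc.2 ▸ .refl)
      · exact absurd (Or.inr (Or.inr h)) hkept

end Adjacency

theorem IsSubgraph.isADMG {H G : MixedGraph V} (hsub : H.IsSubgraph G) (hG : G.IsADMG) :
    H.IsADMG :=
  ⟨fun _ _ hab hba => hG.1 (hsub.2.1 hab) (ReflTransGen.mono (fun _ _ h => hsub.2.1 h) _ _ hba),
    fun v hv => hG.2.1 v (hsub.2.1 hv), fun v hv => hG.2.2 v (hsub.2.2 hv)⟩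

section Descendants

def descendants (G : MixedGraph V) (v : V) : Set V := {u | G.Anc v u}

theorem descendants_ssubset_of_dir {G : MixedGraph V} (hG : G.Acyclic) {a b : V}
    (hab : G.dir a b) : G.descendants b ⊂ G.descendants a :=
  Set.ssubset_iff_of_subset (fun _ hu => ReflTransGen.head hab hu) |>.2
    ⟨a, ReflTransGen.refl, hG hab⟩

theorem ncard_descendants_lt_of_dir [Finite V] {G : MixedGraph V} (hG : G.Acyclic) {a b : V}
    (hab : G.dir a b) : (G.descendants b).ncard < (G.descendants a).ncard :=
  Set.ncard_lt_ncard (descendants_ssubset_of_dir hG hab)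

theorem subset_ancSet (G : MixedGraph V) (Z : Set V) : Z ⊆ G.AncSet Z :=
  fun z hz => ⟨z, hz, .refl⟩

theorem exists_dir_mem_ancSet {G : MixedGraph V} {Z : Set V} {v : V} (hv : v ∈ G.AncSet Z)
    (hvZ : v ∉ Z) : ∃ w, G.dir v w ∧ w ∈ G.AncSet Z := by
  obtain ⟨z, hz, hvz⟩ := hv
  rcases hvz.cases_head with rfl | ⟨w, hvw, hwz⟩
  · exact absurd hz hvZ
  · exact ⟨w, hvw, z, hz, hwz⟩

end Descendants

section StructureOfInterest

def OutDegLeOne (σ : MixedGraph V) (v : V) : Prop :=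
  ∀ ⦃w₁ w₂ : V⦄, σ.dir v w₁ → σ.dir v w₂ → w₁ = w₂

def IsFork (σ : MixedGraph V) (v : V) : Prop :=
  (∃ w₁ w₂, w₁ ≠ w₂ ∧ σ.dir v w₁ ∧ σ.dir v w₂ ∧ ∀ w, σ.dir v w → w = w₁ ∨ w = w₂) ∧
    (∀ w, ¬ σ.dir w v) ∧ (∀ w, ¬ σ.bi v w)

theorem isSOI_iff {σ : MixedGraph V} :
    σ.IsSOI ↔ σ.IsADMG ∧ σ.Connected ∧ ∀ v ∈ σ.verts, σ.OutDegLeOne v ∨ σ.IsFork v :=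
  Iff.rfl

theorem outDegLeOne_or_isFork_of_out_eq {σ τ : MixedGraph V} {v : V}
    (hout : ∀ u, τ.dir v u ↔ σ.dir v u) (hin : ∀ u, τ.dir u v → σ.dir u v)
    (hbi : ∀ u, τ.bi v u → σ.bi v u) (h : σ.OutDegLeOne v ∨ σ.IsFork v) :
    τ.OutDegLeOne v ∨ τ.IsFork v := by
  rcases h with h | ⟨⟨w₁, w₂, hne, h₁, h₂, hall⟩, hnin, hnbi⟩
  · exact Or.inl fun u₁ u₂ hu₁ hu₂ => h ((hout u₁).1 hu₁) ((hout u₂).1 hu₂)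
  · exact Or.inr ⟨⟨w₁, w₂, hne, (hout w₁).2 h₁, (hout w₂).2 h₂,
      fun u hu => hall u ((hout u).1 hu)⟩, fun u hu => hnin u (hin u hu),
      fun u hu => hnbi u (hbi u hu)⟩

end StructureOfInterest

section Reroute

abbrev reroute (σ : MixedGraph V) (r w c : V) : MixedGraph V := (σ.deleteDir w c).addDir r w

variable {G σ : MixedGraph V} {r w c : V}

theorem isSubgraph_reroute (hsub : σ.IsSubgraph G) (hrw : G.dir r w) :
    (σ.reroute r w c).IsSubgraph G := by
  refine ⟨Set.union_subset hsub.1 ?_, ?_, hsub.2.2⟩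
  · exact Set.insert_subset (G.dir_mem hrw).1 (Set.singleton_subset_iff.2 (G.dir_mem hrw).2)
  · rintro a b (h | ⟨rfl, rfl⟩)
    · exact hsub.2.1 h.1
    · exact hrw

theorem mem_verts_of_mem_reroute {v : V} (hv : v ∈ (σ.reroute r w c).verts) (hvr : v ≠ r)
    (hvw : v ≠ w) : v ∈ σ.verts := by
  rcases hv with hv | hv
  · exact hv
  · simp only [Set.mem_insert_iff, Set.mem_singleton_iff] at hv
    tauto

theorem roots_reroute_subset :
    (σ.reroute r w c).roots ⊆ insert w (σ.roots \ {r}) := by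
  rintro v ⟨hv, hnout⟩
  by_cases hvw : v = w
  · exact Or.inl hvw
  have hvr : v ≠ r := fun h => hnout w (Or.inr ⟨h, rfl⟩)
  have hvσ : v ∈ σ.verts := mem_verts_of_mem_reroute hv hvr hvw
  exact Or.inr ⟨⟨hvσ, fun u hu => hnout u (Or.inl ⟨hu, fun h => hvw h.1⟩)⟩, hvr⟩

theorem verts_diff_roots_reroute_subset :
    (σ.reroute r w c).verts \ (σ.reroute r w c).roots ⊆
      insert r (σ.verts \ σ.roots) := by
  rintro v ⟨hv, hnroot⟩
  obtain ⟨u, hu⟩ : ∃ u, (σ.reroute r w c).dir v u := by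
    by_contra! h
    exact hnroot ⟨hv, h⟩
  rcases hu with ⟨hu, -⟩ | ⟨rfl, -⟩
  · exact Or.inr ⟨(σ.dir_mem hu).1, fun hroot => hroot.2 u hu⟩
  · exact Or.inl rfl

theorem isSOI_reroute (hσ : σ.IsSOI) (hADMG : (σ.reroute r w c).IsADMG)
    (hr : σ.IsRoot r) (hrw : r ≠ w) (hw : (σ.deleteDir w c).OutDegLeOne w)
    (hreach : ∀ v ∈ σ.verts, ReflTransGen (σ.reroute r w c).Adj v w) :
    (σ.reroute r w c).IsSOI := by
  refine isSOI_iff.2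
    ⟨hADMG, connected_of_forall_reflTransGen (Or.inr (Set.mem_insert_of_mem r rfl)) ?_, ?_⟩
  · rintro v (hv | hv)
    · exact hreach v hv
    · rcases hv with rfl | rfl
      · exact hreach v hr.1
      · exact .refl
  · intro v hv
    by_cases hvr : v = r
    · subst hvr
      refine Or.inl fun u₁ u₂ hu₁ hu₂ => ?_
      rcases hu₁ with ⟨hu₁, -⟩ | ⟨-, rfl⟩
      · exact absurd hu₁ (hr.2 u₁)
      rcases hu₂ with ⟨hu₂, -⟩ | ⟨-, rfl⟩
      · exact absurd hu₂ (hr.2 u₂)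
      · rfl
    by_cases hvw : v = w
    · subst hvw
      refine Or.inl fun u₁ u₂ hu₁ hu₂ => hw (hu₁.resolve_right ?_) (hu₂.resolve_right ?_) <;>
        exact fun h => hrw h.1.symm
    have hvσ : v ∈ σ.verts := mem_verts_of_mem_reroute hv hvr hvw
    refine outDegLeOne_or_isFork_of_out_eq (σ := σ) (fun u => ?_) (fun u hu => ?_) (fun u hu => hu)
      (hσ.2.2 v hvσ)
    · exact ⟨fun h => h.elim And.left (fun h => absurd h.1 hvr),
        fun h => Or.inl ⟨h, fun h => hvw h.1⟩⟩
    · exact hu.elim And.left (fun h => absurd h.2 hvw)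

theorem IsFork.exists_deleteDir_reflTransGen (hconn : σ.Connected) (hwσ : w ∈ σ.verts)
    (hfork : σ.IsFork w) (hrσ : r ∈ σ.verts) (hrw : r ≠ w) :
    ∃ c, (σ.deleteDir w c).OutDegLeOne w ∧ ReflTransGen (σ.deleteDir w c).Adj r c := by
  obtain ⟨⟨w₁, w₂, hne, -, -, hall⟩, hnin, hnbi⟩ := hfork
  obtain ⟨c, hc, hrc⟩ : ∃ c, (c = w₁ ∨ c = w₂) ∧ ReflTransGen (σ.deleteDir w c).Adj r c := by
    rcases reflTransGen_adj_deleteDir_or (c := w₁) (hconn.2 r hrσ w hwσ) with h | h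
    · refine ⟨w₂, Or.inr rfl, ?_⟩
      -- with both fork edges gone `w` is isolated, so `r ≠ w` cannot still reach it
      rcases reflTransGen_adj_deleteDir_or (c := w₂) h with h' | h'
      · refine absurd (eq_of_reflTransGen_adj_of_isolated ?_ h') hrw
        rintro u (⟨⟨hu, -⟩, -⟩ | ⟨⟨hu, hu₁⟩, hu₂⟩ | hu)
        · exact hnin u hu
        · rcases hall u hu with rfl | rfl
          exacts [hu₁ ⟨rfl, rfl⟩, hu₂ ⟨rfl, rfl⟩]
        · exact hnbi u (σ.bi_symm hu)
      · exact reflTransGen_adj_mono (G := (σ.deleteDir w w₁).deleteDir w w₂)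
          (H := σ.deleteDir w w₂) (fun _ _ h => ⟨h.1.1, h.2⟩) (fun _ _ => id) h'
    · exact ⟨w₁, Or.inl rfl, h⟩
  refine ⟨c, fun u₁ u₂ hu₁ hu₂ => ?_, hrc⟩
  have h₁ := hall u₁ hu₁.1
  have h₂ := hall u₂ hu₂.1
  have hc₁ : u₁ ≠ c := fun h => hu₁.2 ⟨rfl, h⟩
  have hc₂ : u₂ ≠ c := fun h => hu₂.2 ⟨rfl, h⟩
  grind

/-- When `w` is not a fork, `c := w` names no edge of `σ`, so nothing is dropped. -/
theorem exists_reroute_reflTransGen (hσ : σ.IsSOI) (hr : σ.IsRoot r) (hrw : r ≠ w) :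
    ∃ c, (σ.deleteDir w c).OutDegLeOne w ∧
      ∀ v ∈ σ.verts, ReflTransGen (σ.reroute r w c).Adj v w := by
  have lift : ∀ {c a b : V}, ReflTransGen (σ.deleteDir w c).Adj a b →
      ReflTransGen (σ.reroute r w c).Adj a b :=
    fun {c} _ _ => reflTransGen_adj_mono (G := σ.deleteDir w c)
      (H := σ.reroute r w c) (fun _ _ => Or.inl) (fun _ _ => id)
  have hedge : ∀ {c}, (σ.reroute r w c).Adj r w := Or.inl (Or.inr ⟨rfl, rfl⟩)
  by_cases hfork : w ∈ σ.verts ∧ σ.IsFork w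
  · obtain ⟨c, hw, hrc⟩ := hfork.2.exists_deleteDir_reflTransGen hσ.2.1 hfork.1 hr.1 hrw
    refine ⟨c, hw, fun v hv => ?_⟩
    rcases reflTransGen_adj_deleteDir_or (c := c) (hσ.2.1.2 v hv w hfork.1) with h | h
    · exact lift h
    · exact (lift h).trans ((reflTransGen_adj_symm _ (lift hrc)).tail hedge)
  · refine ⟨w, fun u₁ u₂ hu₁ hu₂ => ?_, fun v hv => ?_⟩
    · have hwσ := (σ.dir_mem hu₁.1).1
      exact ((hσ.2.2 w hwσ).resolve_right fun h => hfork ⟨hwσ, h⟩) hu₁.1 hu₂.1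
    · have hnoloop : ∀ ⦃a b⦄, σ.dir a b → (σ.deleteDir w w).dir a b :=
        fun a b h => ⟨h, fun hab => hσ.1.2.1 w (by rwa [hab.1, hab.2] at h)⟩
      exact (lift (reflTransGen_adj_mono hnoloop (fun _ _ => id)
        (hσ.2.1.2 v hv r hr.1))).tail hedge

theorem IsSOI.exists_reroute (hG : G.IsADMG) (hσ : σ.IsSOI) (hsub : σ.IsSubgraph G)
    (hr : σ.IsRoot r) (hrw : G.dir r w) :
    ∃ σ' : MixedGraph V, σ'.IsSOI ∧ σ'.IsSubgraph G ∧ σ.verts ⊆ σ'.verts ∧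
      σ'.roots ⊆ insert w (σ.roots \ {r}) ∧
      σ'.verts \ σ'.roots ⊆ insert r (σ.verts \ σ.roots) := by
  have hne : r ≠ w := fun h => hG.2.1 r (h ▸ hrw)
  obtain ⟨c, hw, hreach⟩ := exists_reroute_reflTransGen hσ hr hne
  have hsub' := isSubgraph_reroute (c := c) hsub hrw
  exact ⟨_, isSOI_reroute hσ (hsub'.isADMG hG) hr hne hw hreach, hsub',
    Set.subset_union_left, roots_reroute_subset, verts_diff_roots_reroute_subset⟩

end Reroute

theorem _root_.Finset.sum_lt_sum_of_subset_insert_erase {ι : Type*} [DecidableEq ι]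
    {f : ι → ℕ} {s t : Finset ι} {r w : ι} (hr : r ∈ s) (hts : t ⊆ insert w (s.erase r))
    (hlt : f w < f r) : ∑ i ∈ t, f i < ∑ i ∈ s, f i :=
  calc ∑ i ∈ t, f i ≤ ∑ i ∈ insert w (s.erase r), f i := Finset.sum_le_sum_of_subset hts
    _ ≤ f w + ∑ i ∈ s.erase r, f i := by
      by_cases hw : w ∈ s.erase r
      · rw [Finset.insert_eq_of_mem hw]
        omega
      · rw [Finset.sum_insert hw]
    _ < f r + ∑ i ∈ s.erase r, f i := by omega
    _ = ∑ i ∈ s, f i := Finset.add_sum_erase s f hr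

theorem exists_connects_of_roots_subset_ancSet [Fintype V] {G : MixedGraph V} (hG : G.IsADMG)
    {X Y Z : Set V} {σ : MixedGraph V} (hσ : σ.IsSOI) (hsub : σ.IsSubgraph G)
    (hX : (σ.verts ∩ X).Nonempty) (hY : (σ.verts ∩ Y).Nonempty)
    (hroots : σ.roots ⊆ X ∪ Y ∪ G.AncSet Z) (hZ : ∀ v ∈ σ.verts, ¬ σ.IsRoot v → v ∉ Z) :
    ∃ σ' : MixedGraph V, σ'.IsSOI ∧ σ'.IsSubgraph G ∧ σ'.Connects X Y Z := by
  classical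
  induction hn : ∑ v ∈ Finset.univ.filter (· ∈ σ.roots \ (X ∪ Y ∪ Z)),
      (G.descendants v).ncard using Nat.strong_induction_on generalizing σ with
  | _ n ih =>
  by_cases hbad : ∃ r ∈ σ.roots, r ∉ X ∪ Y ∪ Z
  · obtain ⟨r, hr, hrXYZ⟩ := hbad
    have hrZ : r ∉ Z := fun h => hrXYZ (Or.inr h)
    obtain ⟨w, hrw, hw⟩ := exists_dir_mem_ancSet
      ((hroots hr).resolve_left fun h => hrXYZ (Or.inl h)) hrZ
    obtain ⟨σ', hσ', hsub', hverts, hroots', hnonroots'⟩ := hσ.exists_reroute hG hsub hr hrw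
    refine ih _ ?_ hσ' hsub' (hX.mono (Set.inter_subset_inter_left _ hverts))
      (hY.mono (Set.inter_subset_inter_left _ hverts)) ?_ ?_ rfl
    · refine hn ▸ Finset.sum_lt_sum_of_subset_insert_erase (w := w)
        (Finset.mem_filter.2 ⟨Finset.mem_univ r, hr, hrXYZ⟩) (fun v hv => ?_)
        (ncard_descendants_lt_of_dir hG.1 hrw)
      obtain ⟨hvσ', hvXYZ⟩ := (Finset.mem_filter.1 hv).2
      rcases hroots' hvσ' with rfl | ⟨hvσ, hvr⟩
      · exact Finset.mem_insert_self _ _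
      · exact Finset.mem_insert_of_mem (Finset.mem_erase.2
          ⟨hvr, Finset.mem_filter.2 ⟨Finset.mem_univ v, hvσ, hvXYZ⟩⟩)
    · intro v hv
      rcases hroots' hv with rfl | ⟨hv, -⟩
      · exact Or.inr hw
      · exact hroots hv
    · intro v hv hnroot
      rcases hnonroots' ⟨hv, hnroot⟩ with rfl | ⟨hv, hnroot⟩
      · exact hrZ
      · exact hZ v hv hnroot
  · push Not at hbad
    exact ⟨σ, hσ, hsub, hX, hY, hbad, hZ⟩

end MixedGraph

theorem stmt7_general {V : Type} [Fintype V] (G : MixedGraph V) (hG : G.IsADMG)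
    (X Y Z R : Set V)
    (σ : MixedGraph V) (hσ : σ.IsSOI) (hsub : σ.IsSubgraph G)
    (hX : (σ.verts ∩ X).Nonempty) (hY : (σ.verts ∩ Y).Nonempty)
    (hroots : σ.roots ⊆ Z ∪ X ∪ Y ∪ R)
    (hZ : ∀ v ∈ σ.verts, ¬ σ.IsRoot v → v ∉ Z)
    (hanc : ∀ r ∈ R, r ∈ G.AncSet Z) :
    ∃ σ' : MixedGraph V, σ'.IsSOI ∧ σ'.IsSubgraph G ∧ σ'.Connects X Y Z := by
  refine exists_connects_of_roots_subset_ancSet hG hσ hsub hX hY (fun v hv => ?_) hZ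
  rcases hroots hv with ((hvZ | hvX) | hvY) | hvR
  · exact Or.inr (G.subset_ancSet Z hvZ)
  · exact Or.inl (Or.inl hvX)
  · exact Or.inl (Or.inr hvY)
  · exact Or.inr (hanc v hvR)

/-- corollary: add paths to remove all problematic roots. -/
theorem stmt7 {V : Type} [Fintype V] (G : MixedGraph V) (hG : G.IsADMG)
    (X Y Z R : Set V)
    (hXV : X ⊆ G.verts) (hYV : Y ⊆ G.verts) (hZV : Z ⊆ G.verts) (hRV : R ⊆ G.verts)
    (hXY : Disjoint X Y) (hXZ : Disjoint X Z) (hXR : Disjoint X R)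
    (hYZ : Disjoint Y Z) (hYR : Disjoint Y R) (hZR : Disjoint Z R)
    (σ : MixedGraph V) (hσ : σ.IsSOI) (hsub : σ.IsSubgraph G)
    (hX : (σ.verts ∩ X).Nonempty) (hY : (σ.verts ∩ Y).Nonempty)
    (hroots : σ.roots ⊆ Z ∪ X ∪ Y ∪ R)
    (hZ : ∀ v ∈ σ.verts, ¬ σ.IsRoot v → v ∉ Z)
    (hanc : ∀ r ∈ R, r ∈ G.AncSet Z) :
    ∃ σ' : MixedGraph V, σ'.IsSOI ∧ σ'.IsSubgraph G ∧ σ'.Connects X Y Z :=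
  stmt7_general G hG X Y Z R σ hσ hsub hX hY hroots hZ hanc
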